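/- arXiv:1003.1621 — 2 statements merged into one kernel-verified Lean document; each statement's English description precedes it below -/
import Mathlib

section
/- Let A_1,...,A_N be mutually commuting Hermitian matrices, ρ_t = Z(t)^{-1} exp(-Σ_j μ_j(t) A_j(t)) where A_j(t) = e^{itH}A_j e^{-itH}, w_t(X) = tr(ρ_t X), and let P_t be the projection built from w_t and the A_j(t) as in the projection method. Then for any Y in span{I, A_1(t),...,A_N(t)}, P_t(δ(Y)) = 0, where δ(X) = HX - XH. -/
open Matrix NormedSpace

/-! The `A_j(t)` are conjugates of the commuting `A_j` by one invertible matrix, so they commute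
with each other and hence with `ρ_t`, a function of them. If `B` and `C` commute with `ρ` and
with each other, cyclicity of the trace turns both `tr (ρ H B C)` and `tr (ρ B H C)` into
`tr (H ρ B C)`, so `w_t (δ(B) C) = 0`. Taking `C = I` and `C = A_j(t) - a_j I`, every term of
`P_t (δ(Y))` vanishes. -/

theorem Commute.mul_mul_mul_of_mul_eq_one {M : Type*} [Monoid M] {a b u v : M}
    (h : Commute a b) (hvu : v * u = 1) : Commute (u * a * v) (u * b * v) := by
  have hconj : ∀ x y : M, u * x * v * (u * y * v) = u * (x * y) * v := fun x y => by
    calc u * x * v * (u * y * v) = u * x * (v * u) * y * v := by simp only [mul_assoc]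
      _ = u * (x * y) * v := by rw [hvu, mul_one, mul_assoc u x]
  rw [Commute, SemiconjBy, hconj, hconj, h.eq]

theorem Matrix.exp_neg_mul_exp {m 𝔸 : Type*} [Fintype m] [DecidableEq m] [NormedCommRing 𝔸]
    [NormedAlgebra ℚ 𝔸] [CompleteSpace 𝔸] (X : Matrix m m 𝔸) :
    exp (-X) * exp X = 1 :=
  exp_neg X ▸ nonsing_inv_mul _ ((isUnit_iff_isUnit_det _).mp (isUnit_exp X))

namespace Matrix

variable {ι R : Type*} [Fintype ι] [CommRing R]

theorem trace_mul_commutator_mul_eq_zero (H : Matrix ι ι R) {ρ B C : Matrix ι ι R}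
    (hB : Commute ρ B) (hC : Commute ρ C) (hBC : Commute B C) :
    trace (ρ * ((H * B - B * H) * C)) = 0 := by
  have hHBC : trace (ρ * (H * B * C)) = trace (H * (ρ * B * C)) :=
    calc trace (ρ * (H * B * C)) = trace (H * B * C * ρ) := trace_mul_comm _ _
      _ = trace (H * (B * C * ρ)) := by simp only [mul_assoc]
      _ = trace (H * (ρ * B * C)) := by rw [mul_assoc ρ, (hB.mul_right hC).eq]
  have hBHC : trace (ρ * (B * H * C)) = trace (H * (ρ * B * C)) :=
    calc trace (ρ * (B * H * C)) = trace (ρ * B * (H * C)) := by simp only [mul_assoc]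
      _ = trace (H * C * (ρ * B)) := trace_mul_comm _ _
      _ = trace (H * (C * ρ * B)) := by simp only [mul_assoc]
      _ = trace (H * (ρ * B * C)) := by
        rw [← hC.eq, mul_assoc ρ, ← hBC.eq, ← mul_assoc ρ]
  rw [sub_mul, mul_sub, trace_sub, hHBC, hBHC, sub_self]

theorem trace_mul_commutator_mul_eq_zero_of_mem_span (H : Matrix ι ι R)
    {ρ C : Matrix ι ι R} {s : Set (Matrix ι ι R)} (hC : Commute ρ C)
    (hs : ∀ B ∈ s, Commute ρ B ∧ Commute B C) {Y : Matrix ι ι R}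
    (hY : Y ∈ Submodule.span R s) :
    trace (ρ * ((H * Y - Y * H) * C)) = 0 := by
  induction hY using Submodule.span_induction with
  | mem B hB => exact trace_mul_commutator_mul_eq_zero H (hs B hB).1 hC (hs B hB).2
  | zero => simp
  | add X Y _ _ hX hY =>
    rw [show ρ * ((H * (X + Y) - (X + Y) * H) * C) =
        ρ * ((H * X - X * H) * C) + ρ * ((H * Y - Y * H) * C) by noncomm_ring,
      trace_add, hX, hY, add_zero]
  | smul r X _ hX =>
    rw [show ρ * ((H * (r • X) - (r • X) * H) * C) = r • (ρ * ((H * X - X * H) * C)) by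
        simp only [Matrix.mul_smul, Matrix.smul_mul, ← smul_sub],
      trace_smul, hX, smul_zero]

end Matrix

theorem stmt_6_general {n N : ℕ} (H : Matrix (Fin n) (Fin n) ℂ)
    (A : Fin N → Matrix (Fin n) (Fin n) ℂ)
    (hcomm : ∀ i j, Commute (A i) (A j))
    (μ : Fin N → ℝ) (t : ℝ)
    (At : Fin N → Matrix (Fin n) (Fin n) ℂ)
    (hAt : ∀ j, At j =
      exp ((Complex.I * t) • H) * A j * exp (-(Complex.I * t) • H))
    (ρt : Matrix (Fin n) (Fin n) ℂ)
    (hρt : ρt = (Matrix.trace (exp (-(∑ j, (μ j : ℂ) • At j))))⁻¹ •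
      exp (-(∑ j, (μ j : ℂ) • At j)))
    (wt : Matrix (Fin n) (Fin n) ℂ → ℂ)
    (hwt : ∀ X, wt X = Matrix.trace (ρt * X))
    (a : Fin N → ℂ)
    (cinv : Matrix (Fin N) (Fin N) ℂ)
    (Pt : Matrix (Fin n) (Fin n) ℂ → Matrix (Fin n) (Fin n) ℂ)
    (hPt : ∀ X, Pt X = wt X • 1 +
      ∑ i, ∑ j, (cinv i j * wt (X * (At j - a j • 1))) • (At i - a i • 1)) :
    ∀ Y ∈ Submodule.span ℂ (insert (1 : Matrix (Fin n) (Fin n) ℂ) (Set.range At)),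
      Pt (H * Y - Y * H) = 0 := by
  intro Y hY
  have hAt_comm : ∀ i j, Commute (At i) (At j) := fun i j => by
    rw [hAt i, hAt j]
    exact (hcomm i j).mul_mul_mul_of_mul_eq_one (by rw [neg_smul]; exact exp_neg_mul_exp _)
  have hρ : ∀ k, Commute ρt (At k) := fun k => by
    have hsum : Commute (∑ j, (μ j : ℂ) • At j) (At k) :=
      Commute.sum_left _ _ _ fun j _ => (hAt_comm j k).smul_left _
    rw [hρt]
    exact hsum.neg_left.exp_left.smul_left _
  have hδ : ∀ C, Commute ρt C → (∀ k, Commute (At k) C) → wt ((H * Y - Y * H) * C) = 0 :=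
    fun C hC hAC => by
      rw [hwt]
      refine trace_mul_commutator_mul_eq_zero_of_mem_span H hC ?_ hY
      rintro B (rfl | ⟨k, rfl⟩)
      · exact ⟨Commute.one_right _, Commute.one_left _⟩
      · exact ⟨hρ k, hAC k⟩
  have hmean : wt (H * Y - Y * H) = 0 := by
    simpa only [mul_one] using hδ 1 (Commute.one_right _) fun k => Commute.one_right _
  have hcentered : ∀ j, wt ((H * Y - Y * H) * (At j - a j • 1)) = 0 := fun j =>
    hδ _ ((hρ j).sub_right ((Commute.one_right _).smul_right _))
      fun k => (hAt_comm k j).sub_right ((Commute.one_right _).smul_right _)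
  rw [hPt, hmean]
  simp only [hcentered, mul_zero, zero_smul, Finset.sum_const_zero, add_zero]

/-- For the maximum-entropy reference state `w_t` and the associated projection `P_t`,
one has `P_t(δ(Y)) = 0` for every `Y` in the span of `{I, A_1(t), ..., A_N(t)}`,
where `δ(X) = HX - XH`. -/
theorem stmt_6 {n N : ℕ} (H : Matrix (Fin n) (Fin n) ℂ) (hH : H.IsHermitian)
    (A : Fin N → Matrix (Fin n) (Fin n) ℂ)
    (hherm : ∀ j, (A j).IsHermitian)
    (hcomm : ∀ i j, Commute (A i) (A j))
    (μ : Fin N → ℝ) (t : ℝ)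
    (At : Fin N → Matrix (Fin n) (Fin n) ℂ)
    (hAt : ∀ j, At j =
      exp ((Complex.I * t) • H) * A j * exp (-(Complex.I * t) • H))
    (ρt : Matrix (Fin n) (Fin n) ℂ)
    (hρt : ρt = (Matrix.trace (exp (-(∑ j, (μ j : ℂ) • At j))))⁻¹ •
      exp (-(∑ j, (μ j : ℂ) • At j)))
    (wt : Matrix (Fin n) (Fin n) ℂ → ℂ)
    (hwt : ∀ X, wt X = Matrix.trace (ρt * X))
    (a : Fin N → ℂ) (ha : ∀ j, a j = wt (At j))
    (c cinv : Matrix (Fin N) (Fin N) ℂ)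
    (hc : ∀ i j, c i j = wt ((At i - a i • 1) * (At j - a j • 1)))
    (hinv : cinv * c = 1) (hinv' : c * cinv = 1)
    (Pt : Matrix (Fin n) (Fin n) ℂ → Matrix (Fin n) (Fin n) ℂ)
    (hPt : ∀ X, Pt X = wt X • 1 +
      ∑ i, ∑ j, (cinv i j * wt (X * (At j - a j • 1))) • (At i - a i • 1)) :
    ∀ Y ∈ Submodule.span ℂ (insert (1 : Matrix (Fin n) (Fin n) ℂ) (Set.range At)),
      Pt (H * Y - Y * H) = 0 :=
  stmt_6_general H A hcomm μ t At hAt ρt hρt wt hwt a cinv Pt hPt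
end

section
/- Let m > 0, L > 0 and ω_k = sqrt(k²/L² + m²) for k ∈ ℤ. Then for every δ ∈ (0, 1/2) there is a constant K (depending on m, L, δ) such that Σ_{q∈ℤ} ω_{k-q}^{-1} ω_q^{-1+δ} ≤ K ω_k^{-1+2δ} for all k ∈ ℤ. -/
/-!
Since `ω_k` is the norm of the complex number `k/L + i m`, it satisfies `ω_k ≤ ω_{k-q} + ω_q`, so
the larger of `ω_{k-q}, ω_q` is at least `ω_k / 2`. Comparing exponents case by case gives
`ω_{k-q}⁻¹ ω_q^{-1+δ} ≤ (max)^{-1+2δ} (min)^{-1-δ} ≤ 2^{1-2δ} ω_k^{-1+2δ} (ω_{k-q}^{-1-δ} + ω_q^{-1-δ})`,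
and `Σ_q ω_q^{-1-δ}` converges because `ω_q ≥ |q|/L` and `1 + δ > 1`.
-/

noncomputable def omega (m L : ℝ) (k : ℤ) : ℝ :=
  Real.sqrt ((k : ℝ) ^ 2 / L ^ 2 + m ^ 2)

open Complex

section Omega

variable {m L : ℝ}

lemma omega_pos (hm : 0 < m) (k : ℤ) : 0 < omega m L k :=
  Real.sqrt_pos.mpr (by positivity)

lemma omega_eq_norm (m L : ℝ) (k : ℤ) : omega m L k = ‖(((k : ℝ) / L : ℝ) : ℂ) + m * I‖ := by
  rw [norm_add_mul_I, div_pow, omega]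

lemma abs_div_le_omega (hL : 0 < L) (m : ℝ) (k : ℤ) : |(k : ℝ)| / L ≤ omega m L k := by
  rw [omega_eq_norm]
  simpa [abs_div, abs_of_pos hL] using abs_re_le_norm ((((k : ℝ) / L : ℝ) : ℂ) + m * I)

lemma omega_le_omega_sub_add_omega (m L : ℝ) (k q : ℤ) :
    omega m L k ≤ omega m L (k - q) + omega m L q := by
  simp only [omega_eq_norm]
  calc ‖(((k : ℝ) / L : ℝ) : ℂ) + m * I‖
      ≤ ‖(((k : ℝ) / L : ℝ) : ℂ) + (2 * m : ℝ) * I‖ := by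
        simp only [norm_add_mul_I]
        exact Real.sqrt_le_sqrt (by nlinarith [sq_nonneg m])
    _ = ‖((((k - q : ℤ) : ℝ) / L : ℝ) + m * I) + ((((q : ℝ) / L : ℝ) : ℂ) + m * I)‖ := by
        push_cast
        ring_nf
    _ ≤ _ := norm_add_le _ _

lemma summable_omega_rpow_neg (hL : 0 < L) (m : ℝ) {s : ℝ} (hs : 1 < s) :
    Summable fun q : ℤ => omega m L q ^ (-s) := by
  refine ((Real.summable_abs_int_rpow hs).mul_left (L ^ s)).of_norm_bounded_eventually ?_
  filter_upwards [(Set.finite_singleton (0 : ℤ)).compl_mem_cofinite] with q hq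
  have hq : 0 < |(q : ℝ)| := by simpa using hq
  calc ‖omega m L q ^ (-s)‖ = omega m L q ^ (-s) :=
        Real.norm_of_nonneg (Real.rpow_nonneg (Real.sqrt_nonneg _) _)
    _ ≤ (|(q : ℝ)| / L) ^ (-s) :=
        Real.rpow_le_rpow_of_nonpos (by positivity) (abs_div_le_omega hL m q) (by linarith)
    _ = L ^ s * |(q : ℝ)| ^ (-s) := by
        rw [Real.div_rpow hq.le hL.le, Real.rpow_neg hL.le, div_inv_eq_mul, mul_comm]

end Omega

section Pointwise

variable {a b c δ : ℝ}

lemma inv_mul_rpow_le_of_le (ha : 0 < a) (hab : a ≤ b) (hδ : 0 ≤ δ) :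
    a⁻¹ * b ^ (-1 + δ) ≤ b ^ (-1 + 2 * δ) * a ^ (-(1 + δ)) := by
  have hb : 0 < b := ha.trans_le hab
  calc a⁻¹ * b ^ (-1 + δ) = a ^ (-(1 + δ)) * a ^ δ * b ^ (-1 + δ) := by
        rw [← Real.rpow_add ha, show -(1 + δ) + δ = -1 by ring, Real.rpow_neg_one]
    _ ≤ a ^ (-(1 + δ)) * b ^ δ * b ^ (-1 + δ) := by gcongr
    _ = b ^ (-1 + 2 * δ) * a ^ (-(1 + δ)) := by
        rw [mul_assoc, ← Real.rpow_add hb, mul_comm]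
        ring_nf

lemma inv_mul_rpow_le_of_ge (hb : 0 < b) (hba : b ≤ a) (hδ : 0 ≤ δ) :
    a⁻¹ * b ^ (-1 + δ) ≤ a ^ (-1 + 2 * δ) * b ^ (-(1 + δ)) := by
  have ha : 0 < a := hb.trans_le hba
  calc a⁻¹ * b ^ (-1 + δ) = a ^ (-1 + 2 * δ) * a ^ (-(2 * δ)) * b ^ (-1 + δ) := by
        rw [← Real.rpow_add ha, show -1 + 2 * δ + -(2 * δ) = -1 by ring, Real.rpow_neg_one]
    _ ≤ a ^ (-1 + 2 * δ) * b ^ (-(2 * δ)) * b ^ (-1 + δ) := by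
        have := Real.rpow_le_rpow_of_nonpos hb hba (by linarith : -(2 * δ) ≤ 0)
        gcongr
    _ = a ^ (-1 + 2 * δ) * b ^ (-(1 + δ)) := by
        rw [mul_assoc, ← Real.rpow_add hb]
        ring_nf

lemma inv_mul_rpow_le_max_mul_min (ha : 0 < a) (hb : 0 < b) (hδ : 0 ≤ δ) :
    a⁻¹ * b ^ (-1 + δ) ≤ max a b ^ (-1 + 2 * δ) * min a b ^ (-(1 + δ)) := by
  rcases le_total a b with hab | hba
  · rw [max_eq_right hab, min_eq_left hab]
    exact inv_mul_rpow_le_of_le ha hab hδ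
  · rw [max_eq_left hba, min_eq_right hba]
    exact inv_mul_rpow_le_of_ge hb hba hδ

lemma max_rpow_le_of_le_add {p : ℝ} (hc : 0 < c) (habc : c ≤ a + b) (hp : p ≤ 0) :
    max a b ^ p ≤ 2 ^ (-p) * c ^ p := by
  calc max a b ^ p ≤ (c / 2) ^ p :=
        Real.rpow_le_rpow_of_nonpos (by positivity) (by grind) hp
    _ = 2 ^ (-p) * c ^ p := by
        rw [Real.div_rpow hc.le zero_le_two, Real.rpow_neg zero_le_two, div_eq_inv_mul]

lemma min_rpow_le_rpow_add_rpow (ha : 0 ≤ a) (hb : 0 ≤ b) (p : ℝ) :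
    min a b ^ p ≤ a ^ p + b ^ p := by
  rcases min_cases a b with ⟨h, _⟩ | ⟨h, _⟩ <;> rw [h]
  · exact le_add_of_nonneg_right (Real.rpow_nonneg hb _)
  · exact le_add_of_nonneg_left (Real.rpow_nonneg ha _)

lemma inv_mul_rpow_le_of_le_add (ha : 0 < a) (hb : 0 < b) (hc : 0 < c) (habc : c ≤ a + b)
    (hδ₀ : 0 ≤ δ) (hδ₁ : δ ≤ 1 / 2) :
    a⁻¹ * b ^ (-1 + δ) ≤
      2 ^ (1 - 2 * δ) * c ^ (-1 + 2 * δ) * (a ^ (-(1 + δ)) + b ^ (-(1 + δ))) := by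
  calc a⁻¹ * b ^ (-1 + δ) ≤ max a b ^ (-1 + 2 * δ) * min a b ^ (-(1 + δ)) :=
        inv_mul_rpow_le_max_mul_min ha hb hδ₀
    _ ≤ 2 ^ (-(-1 + 2 * δ)) * c ^ (-1 + 2 * δ) * (a ^ (-(1 + δ)) + b ^ (-(1 + δ))) := by
        gcongr
        · exact max_rpow_le_of_le_add hc habc (by linarith)
        · exact min_rpow_le_rpow_add_rpow ha.le hb.le _
    _ = _ := by ring_nf

end Pointwise

lemma tsum_le_of_le_mul_sub_add {G : Type*} [AddGroup G] {f g : G → ℝ}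
    (hg : Summable g) (hf : 0 ≤ f) (k : G) (C : ℝ) (hfg : ∀ q, f q ≤ C * (g (k - q) + g q)) :
    ∑' q, f q ≤ C * (2 * ∑' q, g q) := by
  have hg' : Summable fun q => g (k - q) := (Equiv.subLeft k).summable_iff.mpr hg
  have hshift : ∑' q, g (k - q) = ∑' q, g q := (Equiv.subLeft k).tsum_eq g
  have hsum : Summable fun q => C * (g (k - q) + g q) := (hg'.add hg).mul_left C
  calc ∑' q, f q ≤ ∑' q, C * (g (k - q) + g q) :=
        (hsum.of_nonneg_of_le hf hfg).tsum_le_tsum hfg hsum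
    _ = C * (2 * ∑' q, g q) := by
        rw [tsum_mul_left, hg'.tsum_add hg, hshift, two_mul]

/-- For `m, L > 0` and `δ ∈ (0, 1/2)` there is a constant `K` such that
`Σ_{q∈ℤ} ω_{k-q}⁻¹ ω_q^{-1+δ} ≤ K ω_k^{-1+2δ}` for all `k ∈ ℤ`. -/
theorem stmt_11 (m L : ℝ) (hm : 0 < m) (hL : 0 < L) (δ : ℝ)
    (hδ : δ ∈ Set.Ioo (0 : ℝ) (1 / 2)) :
    ∃ K : ℝ, ∀ k : ℤ,
      (∑' q : ℤ, (omega m L (k - q))⁻¹ * (omega m L q) ^ (-1 + δ)) ≤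
        K * (omega m L k) ^ (-1 + 2 * δ) := by
  obtain ⟨hδ₀, hδ₁⟩ := hδ
  refine ⟨2 ^ (1 - 2 * δ) * (2 * ∑' q : ℤ, omega m L q ^ (-(1 + δ))), fun k => ?_⟩
  have hω := omega_pos (L := L) hm
  calc _ ≤ 2 ^ (1 - 2 * δ) * omega m L k ^ (-1 + 2 * δ) *
        (2 * ∑' q : ℤ, omega m L q ^ (-(1 + δ))) :=
        tsum_le_of_le_mul_sub_add (summable_omega_rpow_neg hL m (by linarith))
          (fun q => mul_nonneg (inv_nonneg.2 (hω _).le) (Real.rpow_nonneg (hω q).le _)) k _ fun q =>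
          inv_mul_rpow_le_of_le_add (hω _) (hω _) (hω k)
            (omega_le_omega_sub_add_omega m L k q) hδ₀.le hδ₁.le
    _ = _ := by ring
end
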